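/- For real numbers a, t with 1 < a < t, set m₁ = (a²−1)/(t²−1). Then I₁(a,a;t) + I₅(a,a;t) = 2·K̄(m₁)/√(t²−1), i.e. ∫_{-t}^{-a} √((a−z)/((t²−z²)(z²−1)(−z−a))) dz + ∫_{a}^{t} √((z−a)/((t²−z²)(z²−1)(z+a))) dz = (2/√(t²−1))·∫₀^{π/2} dθ/√(1 − (1−m₁)·sin²θ). -/

import Mathlib

/-!
Reflecting `z ↦ -z` turns `I₁(a,a;t)` into `∫_a^t (z + a) / √((t² - z²)(z² - 1)(z² - a²)) dz`,
and `I₅(a,a;t)` is the same integral with `z - a` in the numerator. The substitution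
`z² = t² - (t² - a²) sin² θ` makes `(t² - z²)(z² - a²)` the square of the Jacobian times `z`,
so the integrands become `(z ± a) / (z √(z² - 1))` in `θ`. Only in this form are they bounded,
which is why the two integrals are added after the substitution. Their sum is
`2 / √(z² - 1) = 2 / (√(t² - 1) √(1 - m sin² θ))` with `m = (t² - a²) / (t² - 1) = 1 - m₁`.
-/

open MeasureTheory intervalIntegral Real Filter Topology

/-- Period integral `I₁`. -/
noncomputable def I1 (a b t : ℝ) : ℝ :=
  ∫ z in (-t)..(-a), Real.sqrt ((b - z) / ((t ^ 2 - z ^ 2) * (z ^ 2 - 1) * (-z - a)))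

/-- Period integral `J₁`. -/
noncomputable def J1 (a b t : ℝ) : ℝ :=
  ∫ z in (-t)..(-a), Real.sqrt ((-z - a) / ((t ^ 2 - z ^ 2) * (z ^ 2 - 1) * (b - z)))

/-- Period integral `I₂`. -/
noncomputable def I2 (a b t : ℝ) : ℝ :=
  ∫ z in (-a)..(-1), Real.sqrt ((b - z) / ((t ^ 2 - z ^ 2) * (z ^ 2 - 1) * (z + a)))

/-- Period integral `J₂`. -/
noncomputable def J2 (a b t : ℝ) : ℝ :=
  ∫ z in (-a)..(-1), Real.sqrt ((z + a) / ((t ^ 2 - z ^ 2) * (z ^ 2 - 1) * (b - z)))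

/-- Period integral `I₄`. -/
noncomputable def I4 (a b t : ℝ) : ℝ :=
  ∫ z in (1:ℝ)..b, Real.sqrt ((b - z) / ((t ^ 2 - z ^ 2) * (z ^ 2 - 1) * (z + a)))

/-- Period integral `J₄`. -/
noncomputable def J4 (a b t : ℝ) : ℝ :=
  ∫ z in (1:ℝ)..b, Real.sqrt ((z + a) / ((t ^ 2 - z ^ 2) * (z ^ 2 - 1) * (b - z)))

/-- Period integral `I₅`. -/
noncomputable def I5 (a b t : ℝ) : ℝ :=
  ∫ z in b..t, Real.sqrt ((z - b) / ((t ^ 2 - z ^ 2) * (z ^ 2 - 1) * (z + a)))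

/-- Period integral `J₅`. -/
noncomputable def J5 (a b t : ℝ) : ℝ :=
  ∫ z in b..t, Real.sqrt ((z + a) / ((t ^ 2 - z ^ 2) * (z ^ 2 - 1) * (z - b)))

/-- The period quotient `Q(a,b;t)`. -/
noncomputable def Q (a b t : ℝ) : ℝ :=
  (I1 a b t + I5 a b t) / (I2 a b t + I4 a b t)
    - (J1 a b t + J5 a b t) / (J2 a b t + J4 a b t)

/-- Complete elliptic integral of the first kind `K(m)`. -/
noncomputable def Kint (m : ℝ) : ℝ :=
  ∫ θ in (0:ℝ)..(π / 2), 1 / Real.sqrt (1 - m * Real.sin θ ^ 2)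

/-- Complete elliptic integral of the second kind `E(m)`. -/
noncomputable def Eint (m : ℝ) : ℝ :=
  ∫ θ in (0:ℝ)..(π / 2), Real.sqrt (1 - m * Real.sin θ ^ 2)

open Set

lemma Real.sqrt_div_mul_eq {p q c : ℝ} (hp : 0 ≤ p) :
    √(p / (c * q)) = p / √(c * (p * q)) := by
  rcases hp.eq_or_lt with rfl | hp
  · simp
  rw [show p / (c * q) = p ^ 2 / (c * (p * q)) by field_simp, Real.sqrt_div (sq_nonneg p),
    Real.sqrt_sq hp.le]

lemma I1_eq_intervalIntegral (a b t : ℝ) :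
    I1 a b t = ∫ z in a..t, √((z + b) / ((t ^ 2 - z ^ 2) * (z ^ 2 - 1) * (z - a))) := by
  rw [I1, ← intervalIntegral.integral_comp_neg]
  congr 1 with z
  ring_nf

lemma integral_Ioo_eq_Kint (m : ℝ) :
    ∫ θ in Ioo 0 (π / 2), 1 / √(1 - m * sin θ ^ 2) = Kint m := by
  rw [Kint, intervalIntegral.integral_of_le (by positivity), integral_Ioc_eq_integral_Ioo]

noncomputable def ellipticSubst (a t θ : ℝ) : ℝ := √(t ^ 2 - (t ^ 2 - a ^ 2) * sin θ ^ 2)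

noncomputable def ellipticSubstDeriv (a t θ : ℝ) : ℝ :=
  -((t ^ 2 - a ^ 2) * sin θ * cos θ) / ellipticSubst a t θ

section ellipticSubst

variable {a t : ℝ}

lemma ellipticSubst_arg_eq (a t θ : ℝ) :
    t ^ 2 - (t ^ 2 - a ^ 2) * sin θ ^ 2 = a ^ 2 * sin θ ^ 2 + t ^ 2 * cos θ ^ 2 := by
  linear_combination -t ^ 2 * sin_sq_add_cos_sq θ

lemma ellipticSubst_arg_nonneg (a t θ : ℝ) : 0 ≤ t ^ 2 - (t ^ 2 - a ^ 2) * sin θ ^ 2 := by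
  rw [ellipticSubst_arg_eq]; positivity

lemma sq_ellipticSubst (a t θ : ℝ) :
    ellipticSubst a t θ ^ 2 = t ^ 2 - (t ^ 2 - a ^ 2) * sin θ ^ 2 :=
  Real.sq_sqrt (ellipticSubst_arg_nonneg a t θ)

@[fun_prop]
lemma continuous_ellipticSubst (a t : ℝ) : Continuous (ellipticSubst a t) := by
  unfold ellipticSubst; fun_prop

lemma le_ellipticSubst (ha : 0 ≤ a) (hat : a ≤ t) (θ : ℝ) : a ≤ ellipticSubst a t θ := by
  refine Real.le_sqrt_of_sq_le ?_
  nlinarith [sin_sq_le_one θ, mul_self_le_mul_self ha hat]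

lemma ellipticSubst_pos (ha : 0 < a) (hat : a ≤ t) (θ : ℝ) : 0 < ellipticSubst a t θ :=
  ha.trans_le (le_ellipticSubst ha.le hat θ)

lemma hasDerivAt_ellipticSubst (ha : 0 < a) (hat : a ≤ t) (θ : ℝ) :
    HasDerivAt (ellipticSubst a t) (ellipticSubstDeriv a t θ) θ := by
  have harg : HasDerivAt (fun θ => t ^ 2 - (t ^ 2 - a ^ 2) * sin θ ^ 2)
      (-((t ^ 2 - a ^ 2) * (2 * sin θ ^ 1 * cos θ))) θ :=
    (((hasDerivAt_sin θ).pow 2).const_mul _).const_sub _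
  have hpos := ellipticSubst_pos ha hat θ
  refine ((Real.hasDerivAt_sqrt (Real.sqrt_pos.1 hpos).ne').comp θ harg).congr_deriv ?_
  rw [ellipticSubstDeriv, ← ellipticSubst]
  field_simp

lemma strictAntiOn_ellipticSubst (ha : 0 ≤ a) (hat : a < t) :
    StrictAntiOn (ellipticSubst a t) (Icc 0 (π / 2)) := by
  intro x hx y hy hxy
  have hpi := pi_pos
  have hsin : sin x < sin y :=
    strictMonoOn_sin ⟨by linarith [hx.1], hx.2⟩ ⟨by linarith [hy.1], hy.2⟩ hxy
  have hsin0 : 0 ≤ sin x := sin_nonneg_of_nonneg_of_le_pi hx.1 (by linarith [hx.2])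
  have hta : 0 < t ^ 2 - a ^ 2 := by nlinarith
  refine Real.sqrt_lt_sqrt (ellipticSubst_arg_nonneg a t y) ?_
  nlinarith [mul_lt_mul_of_pos_left (pow_lt_pow_left₀ hsin hsin0 two_ne_zero) hta]

lemma ellipticSubst_image (ha : 0 ≤ a) (hat : a < t) :
    ellipticSubst a t '' Ioo 0 (π / 2) = Ioo a t := by
  have h0 : ellipticSubst a t 0 = t := by
    simp [ellipticSubst, Real.sqrt_sq (ha.trans hat.le)]
  have hpi : ellipticSubst a t (π / 2) = a := by
    simp [ellipticSubst, Real.sqrt_sq ha]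
  have hpi0 : (0 : ℝ) ≤ π / 2 := by positivity
  refine (image_subset_iff.2 fun θ hθ => ?_).antisymm ?_
  · have hanti := strictAntiOn_ellipticSubst ha hat
    have hlo := hanti (Ioo_subset_Icc_self hθ) ⟨hpi0, le_rfl⟩ hθ.2
    have hhi := hanti ⟨le_rfl, hpi0⟩ (Ioo_subset_Icc_self hθ) hθ.1
    rw [hpi] at hlo
    rw [h0] at hhi
    exact ⟨hlo, hhi⟩
  · simpa [h0, hpi] using
      intermediate_value_Ioo' hpi0 (continuous_ellipticSubst a t).continuousOn

lemma setIntegral_Ioo_eq_ellipticSubst (ha : 0 < a) (hat : a < t) (F : ℝ → ℝ) :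
    ∫ z in Ioo a t, F z =
      ∫ θ in Ioo 0 (π / 2), |ellipticSubstDeriv a t θ| * F (ellipticSubst a t θ) := by
  rw [← ellipticSubst_image ha.le hat, integral_image_eq_integral_abs_deriv_smul measurableSet_Ioo
    (fun θ _ => (hasDerivAt_ellipticSubst ha hat.le θ).hasDerivWithinAt)
    ((strictAntiOn_ellipticSubst ha.le hat).injOn.mono Ioo_subset_Icc_self)]
  rfl

lemma abs_ellipticSubstDeriv_mul_sqrt (ha : 0 < a) (hat : a < t) {θ : ℝ}
    (hθ : θ ∈ Ioo 0 (π / 2)) {p q : ℝ} (hp : 0 ≤ p)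
    (hpq : p * q = ellipticSubst a t θ ^ 2 - a ^ 2) :
    |ellipticSubstDeriv a t θ| *
        √(p / ((t ^ 2 - ellipticSubst a t θ ^ 2) * (ellipticSubst a t θ ^ 2 - 1) * q)) =
      p / (ellipticSubst a t θ * √(ellipticSubst a t θ ^ 2 - 1)) := by
  have hsin : 0 < sin θ := sin_pos_of_pos_of_lt_pi hθ.1 (by linarith [hθ.2, pi_pos])
  have hcos : 0 < cos θ := cos_pos_of_mem_Ioo ⟨by linarith [hθ.1, pi_pos], hθ.2⟩
  have hta : 0 < t ^ 2 - a ^ 2 := by nlinarith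
  have hX : 0 < (t ^ 2 - a ^ 2) * sin θ * cos θ := by positivity
  have hz0 : 0 < ellipticSubst a t θ := ellipticSubst_pos ha hat.le θ
  have hprod : (t ^ 2 - ellipticSubst a t θ ^ 2) * (ellipticSubst a t θ ^ 2 - 1) * (p * q) =
      ((t ^ 2 - a ^ 2) * sin θ * cos θ) ^ 2 * (ellipticSubst a t θ ^ 2 - 1) := by
    rw [hpq, sq_ellipticSubst]
    linear_combination
      -(t ^ 2 - a ^ 2) ^ 2 * sin θ ^ 2 * (t ^ 2 - (t ^ 2 - a ^ 2) * sin θ ^ 2 - 1) *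
        sin_sq_add_cos_sq θ
  have habs :
      |ellipticSubstDeriv a t θ| = (t ^ 2 - a ^ 2) * sin θ * cos θ / ellipticSubst a t θ := by
    rw [ellipticSubstDeriv, abs_div, abs_neg, abs_of_pos hX, abs_of_pos hz0]
  rw [Real.sqrt_div_mul_eq hp, hprod, Real.sqrt_mul (sq_nonneg _), Real.sqrt_sq hX.le, habs]
  field_simp

end ellipticSubst

section selfPeriods

variable {a t : ℝ}

lemma I1_self_eq_integral_ellipticSubst (ha : 0 < a) (hat : a < t) :
    I1 a a t = ∫ θ in Ioo 0 (π / 2),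
      (ellipticSubst a t θ + a) / (ellipticSubst a t θ * √(ellipticSubst a t θ ^ 2 - 1)) := by
  rw [I1_eq_intervalIntegral, intervalIntegral.integral_of_le hat.le,
    integral_Ioc_eq_integral_Ioo, setIntegral_Ioo_eq_ellipticSubst ha hat]
  refine setIntegral_congr_fun measurableSet_Ioo fun θ hθ => ?_
  exact abs_ellipticSubstDeriv_mul_sqrt ha hat hθ
    (add_pos (ellipticSubst_pos ha hat.le θ) ha).le (by ring)

lemma I5_self_eq_integral_ellipticSubst (ha : 0 < a) (hat : a < t) :
    I5 a a t = ∫ θ in Ioo 0 (π / 2),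
      (ellipticSubst a t θ - a) / (ellipticSubst a t θ * √(ellipticSubst a t θ ^ 2 - 1)) := by
  rw [I5, intervalIntegral.integral_of_le hat.le,
    integral_Ioc_eq_integral_Ioo, setIntegral_Ioo_eq_ellipticSubst ha hat]
  refine setIntegral_congr_fun measurableSet_Ioo fun θ hθ => ?_
  exact abs_ellipticSubstDeriv_mul_sqrt ha hat hθ
    (sub_nonneg.2 (le_ellipticSubst ha.le hat.le θ)) (by ring)

lemma I1_self_add_I5_self (ha : 1 < a) (hat : a < t) :
    I1 a a t + I5 a a t = ∫ θ in Ioo 0 (π / 2), 2 / √(ellipticSubst a t θ ^ 2 - 1) := by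
  have ha0 : 0 < a := one_pos.trans ha
  have hz : ∀ θ, 1 < ellipticSubst a t θ := fun θ => ha.trans_le (le_ellipticSubst ha0.le hat.le θ)
  have hden : ∀ θ, ellipticSubst a t θ * √(ellipticSubst a t θ ^ 2 - 1) ≠ 0 := fun θ =>
    mul_ne_zero (one_pos.trans (hz θ)).ne' (Real.sqrt_pos.2 (by nlinarith [hz θ])).ne'
  have hcont_den : Continuous fun θ => ellipticSubst a t θ * √(ellipticSubst a t θ ^ 2 - 1) := by
    fun_prop
  have hint : ∀ {f : ℝ → ℝ}, Continuous f →
      IntegrableOn (fun θ => f θ / (ellipticSubst a t θ * √(ellipticSubst a t θ ^ 2 - 1)))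
        (Ioo 0 (π / 2)) := fun hf =>
    (hf.div hcont_den hden).integrableOn_Icc.mono_set Ioo_subset_Icc_self
  rw [I1_self_eq_integral_ellipticSubst ha0 hat, I5_self_eq_integral_ellipticSubst ha0 hat,
    ← integral_add (hint (by fun_prop)) (hint (by fun_prop))]
  congr 1 with θ
  rw [← add_div, div_eq_div_iff (hden θ) (Real.sqrt_pos.2 (by nlinarith [hz θ])).ne']
  ring

end selfPeriods

lemma sq_ellipticSubst_sub_one {a t : ℝ} (ht : t ^ 2 - 1 ≠ 0) (θ : ℝ) :
    ellipticSubst a t θ ^ 2 - 1 =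
      (t ^ 2 - 1) * (1 - (1 - (a ^ 2 - 1) / (t ^ 2 - 1)) * sin θ ^ 2) := by
  rw [sq_ellipticSubst]
  field_simp
  ring

/-- `I₁(a,a;t) + I₅(a,a;t) = 2 K̄(m₁)/√(t²−1)` with `m₁ = (a²−1)/(t²−1)`. -/
theorem stmt14 (a t : ℝ) (ha : 1 < a) (hat : a < t) :
    I1 a a t + I5 a a t
      = (2 / Real.sqrt (t ^ 2 - 1)) * Kint (1 - (a ^ 2 - 1) / (t ^ 2 - 1)) := by
  have ht : 0 < t ^ 2 - 1 := by nlinarith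
  rw [I1_self_add_I5_self ha hat, ← integral_Ioo_eq_Kint, ← MeasureTheory.integral_const_mul]
  congr 1 with θ
  rw [sq_ellipticSubst_sub_one ht.ne' θ, Real.sqrt_mul ht.le]
  field_simp
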